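/- (Linear conserved quantity.) Let (η, ω_G) : I → ℝ^m × ℝ^{n_g} be a differentiable solution of the approximated system η' = B_Sᵀ ω_G, M ω_G' = −A ω_G − B_G Γ η + u on an interval I containing 0, where B_S = B_G(I − B_L⁺B_L) with B_L⁺ = Γ B_Lᵀ (B_L Γ B_Lᵀ)⁻¹. Then B_L Γ η(t) is constant on I, i.e., B_L Γ η(t) = B_L Γ η(0) for all t ∈ I. -/

import Mathlib

open Matrix

/-!
Write `P = 1 - Γ B_Lᵀ (B_L Γ B_Lᵀ)⁻¹ B_L` for the projector defining `B_S = B_G P`. It kills the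
columns of `Γ B_Lᵀ`, and since `Γ` is symmetric this says `B_L Γ Pᵀ = 0`. Hence
`(B_L Γ η)' = B_L Γ Pᵀ B_Gᵀ ω_G = 0` along any solution, and a function with
vanishing derivative on a convex set is constant there.
-/

theorem Convex.eq_of_hasDerivAt_zero {E : Type*} [NormedAddCommGroup E] [NormedSpace ℝ E]
    {f : ℝ → E} {s : Set ℝ} (hs : Convex ℝ s) (hf : ∀ t ∈ s, HasDerivAt f 0 t)
    {x y : ℝ} (hx : x ∈ s) (hy : y ∈ s) : f x = f y := by
  have h := hs.norm_image_sub_le_of_norm_hasDerivWithin_le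
    (fun t ht => (hf t ht).hasDerivWithinAt) (fun _ _ => norm_zero.le) hy hx
  rwa [zero_mul, norm_le_zero_iff, sub_eq_zero] at h

theorem HasDerivAt.matrix_mulVec {m n : Type*} [Fintype m] [Fintype n]
    {f : ℝ → m → ℝ} {f' : m → ℝ} {t : ℝ} (A : Matrix n m ℝ) (hf : HasDerivAt f f' t) :
    HasDerivAt (fun s => A *ᵥ f s) (A *ᵥ f') t :=
  (Matrix.mulVecLin A).toContinuousLinearMap.hasFDerivAt.comp_hasDerivAt t hf

namespace Matrix

variable {R : Type*} [CommRing R] {m n : Type*} [Fintype m] [Fintype n] [DecidableEq m]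
  [DecidableEq n]

theorem one_sub_mul_inv_mul_mul_transpose_eq_zero (B : Matrix n m R) (Γ : Matrix m m R)
    (h : IsUnit (B * Γ * Bᵀ).det) :
    (1 - Γ * Bᵀ * (B * Γ * Bᵀ)⁻¹ * B) * (Γ * Bᵀ) = 0 := by
  have hcancel : (B * Γ * Bᵀ)⁻¹ * (B * (Γ * Bᵀ)) = 1 := by
    rw [← Matrix.mul_assoc B, nonsing_inv_mul _ h]
  rw [Matrix.sub_mul, Matrix.one_mul, Matrix.mul_assoc, Matrix.mul_assoc, hcancel,
    Matrix.mul_one, sub_self]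

theorem mul_mul_transpose_one_sub_mul_inv_mul_eq_zero {p : Type*} [Fintype p]
    (B : Matrix n m R) (Γ : Matrix m m R) (hΓ : Γᵀ = Γ) (h : IsUnit (B * Γ * Bᵀ).det)
    (C : Matrix p m R) :
    B * Γ * (C * (1 - Γ * Bᵀ * (B * Γ * Bᵀ)⁻¹ * B))ᵀ = 0 := by
  calc B * Γ * (C * (1 - Γ * Bᵀ * (B * Γ * Bᵀ)⁻¹ * B))ᵀ
      = (C * ((1 - Γ * Bᵀ * (B * Γ * Bᵀ)⁻¹ * B) * (Γ * Bᵀ)))ᵀ := by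
        rw [← Matrix.mul_assoc, transpose_mul _ (Γ * Bᵀ), transpose_mul Γ, transpose_transpose,
          hΓ]
    _ = 0 := by
        rw [one_sub_mul_inv_mul_mul_transpose_eq_zero B Γ h, Matrix.mul_zero, transpose_zero]

end Matrix

theorem conserved_quantity_linear_general
    {ng nl m : ℕ}
    (BG : Matrix (Fin ng) (Fin m) ℝ) (BL : Matrix (Fin nl) (Fin m) ℝ)
    (γ : Fin m → ℝ)
    (hinv : IsUnit (BL * diagonal γ * BLᵀ).det)
    (I : Set ℝ) (hI0 : (0 : ℝ) ∈ I) (hIconv : Convex ℝ I)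
    (η : ℝ → Fin m → ℝ) (ωG : ℝ → Fin ng → ℝ)
    (hη : ∀ t ∈ I, HasDerivAt η
      ((BG * (1 - (diagonal γ * BLᵀ * (BL * diagonal γ * BLᵀ)⁻¹) * BL))ᵀ *ᵥ ωG t) t) :
    ∀ t ∈ I, (BL * diagonal γ) *ᵥ η t = (BL * diagonal γ) *ᵥ η 0 := by
  have hderiv : ∀ t ∈ I, HasDerivAt (fun s => (BL * diagonal γ) *ᵥ η s) 0 t := by
    intro t ht
    simpa only [mulVec_mulVec, mul_mul_transpose_one_sub_mul_inv_mul_eq_zero BL _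
      (diagonal_transpose γ) hinv, zero_mulVec] using (hη t ht).matrix_mulVec (BL * diagonal γ)
  exact fun t ht => hIconv.eq_of_hasDerivAt_zero hderiv ht hI0

theorem conserved_quantity_linear
    {ng nl m : ℕ} (hng : 0 < ng) (hnl : 0 < nl) (hm : 0 < m)
    (BG : Matrix (Fin ng) (Fin m) ℝ) (BL : Matrix (Fin nl) (Fin m) ℝ)
    (γ : Fin m → ℝ) (hγ : ∀ k, 0 < γ k)
    (hrank : BL.rank = nl)
    (hinv : IsUnit (BL * diagonal γ * BLᵀ).det)
    (Md Ad : Fin ng → ℝ) (hM : ∀ i, 0 < Md i) (hA : ∀ i, 0 < Ad i)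
    (u : Fin ng → ℝ)
    (I : Set ℝ) (hI0 : (0 : ℝ) ∈ I) (hIconv : Convex ℝ I)
    (η : ℝ → Fin m → ℝ) (ωG ωG' : ℝ → Fin ng → ℝ)
    (hη : ∀ t ∈ I, HasDerivAt η
      ((BG * (1 - (diagonal γ * BLᵀ * (BL * diagonal γ * BLᵀ)⁻¹) * BL))ᵀ *ᵥ ωG t) t)
    (hωG : ∀ t ∈ I, HasDerivAt ωG (ωG' t) t)
    (hswing : ∀ t ∈ I,
      diagonal Md *ᵥ ωG' t =
        -(diagonal Ad *ᵥ ωG t) - (BG * diagonal γ) *ᵥ η t + u) :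
    ∀ t ∈ I, (BL * diagonal γ) *ᵥ η t = (BL * diagonal γ) *ᵥ η 0 :=
  conserved_quantity_linear_general BG BL γ hinv I hI0 hIconv η ωG hη
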